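/- arXiv:2506.15876 — 6 statements merged into one kernel-verified Lean document; each statement's English description precedes it below -/
import Mathlib

section
/- Let V be a real Hilbert space, let a : V × V → ℝ be a bilinear form that is coercive with constant ᾱ > 0, let α > 0, and let ζ ↦ F_ζ be an L_F-Lipschitz family of loads. Suppose T̂ : V → V is a map such that for every ζ ∈ V, a(T̂(ζ), v) = α F_ζ(v) for all v ∈ V (i.e., T̂ is the solution operator of the linearised registration problem). If α L_F < ᾱ, then T̂ has exactly one fixed point: there exists a unique u ∈ V with T̂(u) = u, equivalently a unique u ∈ V with a(u, v) = α F_u(v) for all v ∈ V. -/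
/-- Existence and uniqueness of a fixed point of the solution operator of the
linearised registration problem, when `α L_F < ᾱ`. -/
theorem stmt_2 {V : Type*} [NormedAddCommGroup V] [InnerProductSpace ℝ V] [CompleteSpace V]
    (a : V →ₗ[ℝ] V →ₗ[ℝ] ℝ) (abar α L_F : ℝ) (habar : 0 < abar) (hα : 0 < α)
    (hcoer : ∀ v : V, abar * ‖v‖ ^ 2 ≤ a v v)
    (F : V → (V →L[ℝ] ℝ))
    (hLip : ∀ ζ η : V, ‖F ζ - F η‖ ≤ L_F * ‖ζ - η‖)
    (T : V → V)
    (hT : ∀ ζ : V, ∀ v : V, a (T ζ) v = α * F ζ v)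
    (hsmall : α * L_F < abar) :
    (∃! u : V, T u = u) ∧ (∃! u : V, ∀ v : V, a u v = α * F u v) := by
  have : Nonempty V := ⟨0⟩
  set Kr : ℝ := max (α * L_F / abar) 0 with hKr
  have hKlt : Kr < 1 := by
    apply max_lt _ one_pos
    rw [div_lt_one habar]; exact hsmall
  set K : NNReal := ⟨Kr, le_max_right _ _⟩ with hKdef
  have key : ∀ ζ η : V, ‖T ζ - T η‖ ≤ Kr * ‖ζ - η‖ := by
    intro ζ η
    set d := T ζ - T η with hd
    have h1 : abar * ‖d‖ ^ 2 ≤ α * L_F * ‖ζ - η‖ * ‖d‖ := by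
      have had : a d d = α * ((F ζ - F η) d) := by
        simp only [hd, map_sub, LinearMap.sub_apply, hT, ContinuousLinearMap.sub_apply]
        ring
      have h2 : (F ζ - F η) d ≤ ‖F ζ - F η‖ * ‖d‖ :=
        le_trans (le_abs_self _) ((F ζ - F η).le_opNorm d)
      have h3 : ‖F ζ - F η‖ * ‖d‖ ≤ L_F * ‖ζ - η‖ * ‖d‖ :=
        mul_le_mul_of_nonneg_right (hLip ζ η) (norm_nonneg d)
      calc abar * ‖d‖ ^ 2 ≤ a d d := hcoer d
        _ = α * ((F ζ - F η) d) := had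
        _ ≤ α * (L_F * ‖ζ - η‖ * ‖d‖) :=
            mul_le_mul_of_nonneg_left (h2.trans h3) hα.le
        _ = α * L_F * ‖ζ - η‖ * ‖d‖ := by ring
    rcases eq_or_lt_of_le (norm_nonneg d) with h0 | h0
    · rw [← h0]
      exact mul_nonneg (le_max_right _ _) (norm_nonneg _)
    · have h4 : abar * ‖d‖ ≤ α * L_F * ‖ζ - η‖ := by nlinarith
      have h5 : ‖d‖ ≤ α * L_F / abar * ‖ζ - η‖ := by
        rw [div_mul_eq_mul_div, le_div_iff₀ habar]; nlinarith
      exact h5.trans (mul_le_mul_of_nonneg_right (le_max_left _ _) (norm_nonneg _))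
  have hC : ContractingWith K T := by
    refine ⟨by exact_mod_cast hKlt, LipschitzWith.of_dist_le_mul fun x y => ?_⟩
    rw [dist_eq_norm, dist_eq_norm]
    exact key x y
  have hfix : ∃! u : V, T u = u :=
    ⟨hC.fixedPoint T, hC.fixedPoint_isFixedPt, fun y hy => hC.fixedPoint_unique hy⟩
  refine ⟨hfix, ?_⟩
  obtain ⟨u, hu, huniq⟩ := hfix
  have equiv : ∀ w : V, (∀ v : V, a w v = α * F w v) ↔ T w = w := by
    intro w
    constructor
    · intro hw
      have hz : ∀ v : V, a (T w - w) v = 0 := by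
        intro v
        simp only [map_sub, LinearMap.sub_apply, hT, hw]
        ring
      have h0 : abar * ‖T w - w‖ ^ 2 ≤ 0 := by
        calc abar * ‖T w - w‖ ^ 2 ≤ a (T w - w) (T w - w) := hcoer _
          _ = 0 := hz _
      have hn2 : ‖T w - w‖ ^ 2 = 0 :=
        le_antisymm (by nlinarith [sq_nonneg ‖T w - w‖]) (sq_nonneg _)
      have : ‖T w - w‖ = 0 := pow_eq_zero_iff two_ne_zero |>.mp hn2
      rw [norm_eq_zero, sub_eq_zero] at this
      exact this
    · intro hw v
      calc (a w) v = (a (T w)) v := by rw [hw]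
        _ = α * F w v := hT w v
  exact ⟨u, (equiv u).mpr hu, fun y hy => huniq y ((equiv y).mp hy)⟩
end

section
/- Let V be a real Hilbert space, let a : V × V → ℝ be a bilinear form that is coercive with constant ᾱ > 0, let α > 0, and let ζ ↦ F_ζ be an L_F-Lipschitz family of loads. Let V_h ⊆ V be a closed subspace and suppose T_h : V_h → V_h is a map such that for every ζ_h ∈ V_h, a(T_h(ζ_h), v_h) = α F_{ζ_h}(v_h) for all v_h ∈ V_h (the discrete solution operator). If α L_F < ᾱ, then T_h has exactly one fixed point in V_h; equivalently, there is a unique u_h ∈ V_h with a(u_h, v_h) = α F_{u_h}(v_h) for all v_h ∈ V_h. -/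
/-!
Coercivity gives the stability estimate `ᾱ ‖u‖ ≤ ‖φ‖` whenever `a(u, ·) = φ`. Applied on `V_h`
to the difference of two discrete solutions, whose loads differ by at most `α L_F ‖ζ - η‖`, it
shows that `T_h` is a contraction with constant `α L_F / ᾱ < 1`; since `V_h` is closed, hence
complete, Banach's fixed point theorem applies. Coercivity also makes `u ↦ a(u, ·)` injective,
so the fixed points of `T_h` are exactly the solutions of the nonlinear discrete problem.
-/

section Coercive

variable {E : Type*} [NormedAddCommGroup E] [NormedSpace ℝ E]
  {a : E →ₗ[ℝ] E →ₗ[ℝ] ℝ} {c : ℝ}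

theorem mul_norm_le_opNorm_of_coercive (hcoer : ∀ v, c * ‖v‖ ^ 2 ≤ a v v)
    {u : E} {φ : E →L[ℝ] ℝ} (hu : ∀ v, a u v = φ v) : c * ‖u‖ ≤ ‖φ‖ := by
  rcases (norm_nonneg u).eq_or_lt with hu0 | hu0
  · rw [← hu0, mul_zero]
    exact norm_nonneg φ
  · refine le_of_mul_le_mul_right ?_ hu0
    calc c * ‖u‖ * ‖u‖ = c * ‖u‖ ^ 2 := by ring
      _ ≤ a u u := hcoer u
      _ = φ u := hu u
      _ ≤ ‖φ‖ * ‖u‖ := (le_abs_self _).trans (φ.le_opNorm u)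

theorem eq_of_coercive (hc : 0 < c) (hcoer : ∀ v, c * ‖v‖ ^ 2 ≤ a v v) {u w : E}
    (h : ∀ v, a u v = a w v) : u = w := by
  have hle : c * ‖u - w‖ ≤ ‖(0 : E →L[ℝ] ℝ)‖ :=
    mul_norm_le_opNorm_of_coercive hcoer fun v => by simp [h v]
  rw [norm_zero] at hle
  exact sub_eq_zero.mp (norm_le_zero_iff.mp (nonpos_of_mul_nonpos_right hle hc))

theorem contractingWith_of_coercive (hc : 0 < c) (hcoer : ∀ v, c * ‖v‖ ^ 2 ≤ a v v)
    {T : E → E} {G : E → E →L[ℝ] ℝ} (hTG : ∀ x v, a (T x) v = G x v) {L : ℝ}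
    (hG : ∀ x y, ‖G x - G y‖ ≤ L * ‖x - y‖) (hL : L < c) :
    ContractingWith (L / c).toNNReal T := by
  refine ⟨Real.toNNReal_lt_one.mpr ((div_lt_one hc).mpr hL), ?_⟩
  refine LipschitzWith.of_dist_le_mul fun x y => ?_
  have hstab : c * ‖T x - T y‖ ≤ ‖G x - G y‖ :=
    mul_norm_le_opNorm_of_coercive hcoer fun v => by simp [hTG]
  rw [dist_eq_norm, dist_eq_norm]
  calc ‖T x - T y‖ ≤ L / c * ‖x - y‖ := by
        rw [div_mul_eq_mul_div, le_div_iff₀ hc, mul_comm]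
        exact hstab.trans (hG x y)
    _ ≤ (L / c).toNNReal * ‖x - y‖ :=
        mul_le_mul_of_nonneg_right (Real.le_coe_toNNReal _) (norm_nonneg _)

theorem norm_smul_comp_subtypeL_sub_le (K : Submodule ℝ E) {α : ℝ} (hα : 0 ≤ α)
    (φ ψ : E →L[ℝ] ℝ) :
    ‖(α • φ).comp K.subtypeL - (α • ψ).comp K.subtypeL‖ ≤ α * ‖φ - ψ‖ := calc
  _ = ‖(α • (φ - ψ)).comp K.subtypeL‖ := by rw [smul_sub, ContinuousLinearMap.sub_comp]
  _ ≤ ‖α • (φ - ψ)‖ * 1 := (ContinuousLinearMap.opNorm_comp_le _ _).trans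
      (mul_le_mul_of_nonneg_left K.norm_subtypeL_le (norm_nonneg _))
  _ = α * ‖φ - ψ‖ := by rw [mul_one, norm_smul, Real.norm_of_nonneg hα]

end Coercive

/-- Existence and uniqueness of a fixed point of the discrete solution operator
on a closed subspace `V_h`, when `α L_F < ᾱ`. -/
theorem stmt_3 {V : Type*} [NormedAddCommGroup V] [InnerProductSpace ℝ V] [CompleteSpace V]
    (a : V →ₗ[ℝ] V →ₗ[ℝ] ℝ) (abar α L_F : ℝ) (habar : 0 < abar) (hα : 0 < α)
    (hcoer : ∀ v : V, abar * ‖v‖ ^ 2 ≤ a v v)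
    (F : V → (V →L[ℝ] ℝ))
    (hLip : ∀ ζ η : V, ‖F ζ - F η‖ ≤ L_F * ‖ζ - η‖)
    (Vh : Submodule ℝ V) (hVh : IsClosed (Vh : Set V))
    (Th : Vh → Vh)
    (hTh : ∀ ζh : Vh, ∀ vh : Vh, a (Th ζh : V) (vh : V) = α * F (ζh : V) (vh : V))
    (hsmall : α * L_F < abar) :
    (∃! uh : Vh, Th uh = uh) ∧
      (∃! uh : Vh, ∀ vh : Vh, a (uh : V) (vh : V) = α * F (uh : V) (vh : V)) := by
  have : CompleteSpace Vh := hVh.completeSpace_coe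
  let ah : Vh →ₗ[ℝ] Vh →ₗ[ℝ] ℝ := a.compl₁₂ Vh.subtype Vh.subtype
  have hcoerh : ∀ v : Vh, abar * ‖v‖ ^ 2 ≤ ah v v := fun v => hcoer v
  let G : Vh → Vh →L[ℝ] ℝ := fun ζ => (α • F ζ).comp Vh.subtypeL
  have hG : ∀ ζ η, ‖G ζ - G η‖ ≤ α * L_F * ‖ζ - η‖ := fun ζ η =>
    (norm_smul_comp_subtypeL_sub_le Vh hα.le _ _).trans
      (by rw [mul_assoc]; exact mul_le_mul_of_nonneg_left (hLip ζ η) hα.le)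
  have hT := contractingWith_of_coercive habar hcoerh (G := G) hTh hG hsmall
  have hfix : ∃! uh : Vh, Th uh = uh :=
    ⟨hT.fixedPoint Th, hT.fixedPoint_isFixedPt, fun _ hu => hT.fixedPoint_unique hu⟩
  have hsol : ∀ uh : Vh, Th uh = uh ↔ ∀ vh : Vh, a uh vh = α * F uh vh := fun uh =>
    ⟨fun h vh => by simpa only [h] using hTh uh vh,
      fun h => eq_of_coercive habar hcoerh fun vh => (hTh uh vh).trans (h vh).symm⟩
  simp_rw [← hsol]
  exact ⟨hfix, hfix⟩
end

section
/- (Abstract reliability bound.) Let V be a real Hilbert space, let a : V × V → ℝ be a bilinear form that is coercive with constant ᾱ > 0, let α > 0, and let ζ ↦ F_ζ be an L_F-Lipschitz family of loads with α L_F < ᾱ. Let u ∈ V satisfy a(u, v) = α F_u(v) for all v ∈ V, and let u_h ∈ V be arbitrary. Define the residual functional ρ ∈ V' by ρ(w) := α F_{u_h}(w) − a(u_h, w). Then ‖u − u_h‖ ≤ ‖ρ‖_{V'} / (ᾱ − α L_F). -/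
/-- Abstract reliability bound: the error is controlled by the dual norm of the
residual functional, divided by `ᾱ − α L_F`. -/
theorem stmt_4 {V : Type*} [NormedAddCommGroup V] [InnerProductSpace ℝ V] [CompleteSpace V]
    (a : V →ₗ[ℝ] V →ₗ[ℝ] ℝ) (abar α L_F : ℝ) (habar : 0 < abar) (hα : 0 < α)
    (hcoer : ∀ v : V, abar * ‖v‖ ^ 2 ≤ a v v)
    (F : V → (V →L[ℝ] ℝ))
    (hLip : ∀ ζ η : V, ‖F ζ - F η‖ ≤ L_F * ‖ζ - η‖)
    (hsmall : α * L_F < abar)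
    (u uh : V)
    (hu : ∀ v : V, a u v = α * F u v)
    (ρ : V →L[ℝ] ℝ)
    (hρ : ∀ w : V, ρ w = α * F uh w - a uh w) :
    ‖u - uh‖ ≤ ‖ρ‖ / (abar - α * L_F) := by
  set e := u - uh with he
  have hpos : 0 < abar - α * L_F := by linarith
  by_cases h0 : ‖e‖ = 0
  · rw [h0]
    positivity
  have hne : 0 < ‖e‖ := lt_of_le_of_ne (norm_nonneg _) (Ne.symm h0)
  -- key inequality
  have key : a e e = α * ((F u - F uh) e) + ρ e := by
    have h1 : a e e = a u e - a uh e := by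
      simp only [he, map_sub, LinearMap.sub_apply]; ring
    rw [h1, hu e, hρ e]
    simp only [ContinuousLinearMap.sub_apply]
    ring
  have hFe : ((F u - F uh) e) ≤ L_F * ‖e‖ * ‖e‖ := calc
    ((F u - F uh) e) ≤ ‖F u - F uh‖ * ‖e‖ :=
      le_trans (le_abs_self _) ((F u - F uh).le_opNorm e)
    _ ≤ L_F * ‖e‖ * ‖e‖ := by
      have := hLip u uh
      rw [← he] at this
      nlinarith [norm_nonneg e]
  have hρe : ρ e ≤ ‖ρ‖ * ‖e‖ := le_trans (le_abs_self _) (ρ.le_opNorm e)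
  have main : abar * ‖e‖ ^ 2 ≤ α * (L_F * ‖e‖ * ‖e‖) + ‖ρ‖ * ‖e‖ := by
    calc abar * ‖e‖ ^ 2 ≤ a e e := hcoer e
    _ = α * ((F u - F uh) e) + ρ e := key
    _ ≤ α * (L_F * ‖e‖ * ‖e‖) + ‖ρ‖ * ‖e‖ := by
        have := mul_le_mul_of_nonneg_left hFe hα.le
        linarith
  have : (abar - α * L_F) * ‖e‖ ≤ ‖ρ‖ := by
    nlinarith [main, hne]
  rw [le_div_iff₀ hpos]
  linarith
end

section
/- (Abstract efficiency bound.) Let V be a real Hilbert space, let a : V × V → ℝ be a bilinear form that is bounded with constant C_a > 0, let α > 0, and let ζ ↦ F_ζ be an L_F-Lipschitz family of loads. Let u ∈ V satisfy a(u, v) = α F_u(v) for all v ∈ V, and let u_h ∈ V be arbitrary. Define the residual functional ρ ∈ V' by ρ(w) := α F_{u_h}(w) − a(u_h, w). Then ‖ρ‖_{V'} ≤ (C_a + α L_F) ‖u − u_h‖. -/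
/-- Abstract efficiency bound: the dual norm of the residual functional is
controlled by `(C_a + α L_F)` times the error. -/
theorem stmt_5 {V : Type*} [NormedAddCommGroup V] [InnerProductSpace ℝ V] [CompleteSpace V]
    (a : V →ₗ[ℝ] V →ₗ[ℝ] ℝ) (C_a α L_F : ℝ) (hCa : 0 < C_a) (hα : 0 < α)
    (hbdd : ∀ u v : V, |a u v| ≤ C_a * ‖u‖ * ‖v‖)
    (F : V → (V →L[ℝ] ℝ))
    (hLip : ∀ ζ η : V, ‖F ζ - F η‖ ≤ L_F * ‖ζ - η‖)
    (u uh : V)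
    (hu : ∀ v : V, a u v = α * F u v)
    (ρ : V →L[ℝ] ℝ)
    (hρ : ∀ w : V, ρ w = α * F uh w - a uh w) :
    ‖ρ‖ ≤ (C_a + α * L_F) * ‖u - uh‖ := by
  by_cases heq : u = uh
  · have hρ0 : ρ = 0 := by
      ext w
      have h := hu w
      rw [heq] at h
      simp [hρ w, h]
    have : (0:ℝ) ≤ (C_a + α * L_F) * ‖u - uh‖ := by
      simp [heq]
    simpa [hρ0] using this
  · have hpos : 0 < ‖u - uh‖ := by
      rw [norm_pos_iff, sub_ne_zero]
      exact heq
    have hL : 0 ≤ L_F := by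
      have h1 : (0:ℝ) ≤ L_F * ‖u - uh‖ :=
        (norm_nonneg _).trans (hLip u uh)
      nlinarith
    apply ContinuousLinearMap.opNorm_le_bound
    · positivity
    · intro w
      have key : ρ w = α * ((F uh - F u) w) + a (u - uh) w := by
        simp [hρ w, ContinuousLinearMap.sub_apply, map_sub, hu w,
          LinearMap.sub_apply]
        ring
      have h1 : |α * ((F uh - F u) w)| ≤ α * L_F * ‖u - uh‖ * ‖w‖ := by
        rw [abs_mul, abs_of_pos hα]
        have := (F uh - F u).le_opNorm w
        have h2 : ‖(F uh - F u) w‖ ≤ L_F * ‖uh - u‖ * ‖w‖ := by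
          calc ‖(F uh - F u) w‖ ≤ ‖F uh - F u‖ * ‖w‖ := (F uh - F u).le_opNorm w
          _ ≤ L_F * ‖uh - u‖ * ‖w‖ := by
              exact mul_le_mul_of_nonneg_right (hLip uh u) (norm_nonneg w)
        rw [norm_sub_rev uh u] at h2
        calc α * |(F uh - F u) w| ≤ α * (L_F * ‖u - uh‖ * ‖w‖) :=
              mul_le_mul_of_nonneg_left h2 hα.le
          _ = α * L_F * ‖u - uh‖ * ‖w‖ := by ring
      have h2 : |a (u - uh) w| ≤ C_a * ‖u - uh‖ * ‖w‖ := hbdd _ _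
      calc ‖ρ w‖ = |α * ((F uh - F u) w) + a (u - uh) w| := by rw [key]; rfl
        _ ≤ |α * ((F uh - F u) w)| + |a (u - uh) w| := abs_add_le _ _
        _ ≤ α * L_F * ‖u - uh‖ * ‖w‖ + C_a * ‖u - uh‖ * ‖w‖ := add_le_add h1 h2
        _ = (C_a + α * L_F) * ‖u - uh‖ * ‖w‖ := by ring
end

section
/- Let d ≥ 1 and let T, R : ℝ^d → ℝ with T differentiable everywhere. Assume there are constants M_T, M_R, M_∇, L_∇ ≥ 0 such that |T(x)| ≤ M_T, |R(x)| ≤ M_R, |∇T(x)| ≤ M_∇ for all x ∈ ℝ^d, and ∇T is Lipschitz with constant L_∇. Let Ω ⊆ ℝ^d. For a map u : Ω → ℝ^d define the registration load f_u : Ω → ℝ^d by f_u(x) := (T(x + u(x)) − R(x)) ∇T(x + u(x)). Then for all maps u, v : Ω → ℝ^d and every x ∈ Ω: (i) |f_u(x) − f_v(x)| ≤ (M_∇² + (M_T + M_R) L_∇) |u(x) − v(x)|, and (ii) |f_u(x)| ≤ (M_T + M_R) M_∇. In particular the pointwise Lipschitz-continuity and uniform-boundedness assumptions on the deformable image registration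 load hold with L_f = M_∇² + (M_T + M_R) L_∇ and M_f = (M_T + M_R) M_∇. -/
lemma stmt_6_Tlip (d : ℕ)
    (T : EuclideanSpace ℝ (Fin d) → ℝ)
    (hT : Differentiable ℝ T) (Mgrad : ℝ)
    (hgradbdd : ∀ x, ‖gradient T x‖ ≤ Mgrad) :
    ∀ a b, |T a - T b| ≤ Mgrad * ‖a - b‖ := by
  intro a b
  have hfd : ∀ x, ‖fderiv ℝ T x‖ ≤ Mgrad := by
    intro x
    have : ‖gradient T x‖ = ‖fderiv ℝ T x‖ := by
      rw [gradient]; exact (InnerProductSpace.toDual ℝ _).symm.norm_map _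
    rw [← this]; exact hgradbdd x
  have := (convex_univ : Convex ℝ (Set.univ : Set (EuclideanSpace ℝ (Fin d)))).norm_image_sub_le_of_norm_fderiv_le
    (fun x _ => (hT x)) (fun x _ => hfd x) (Set.mem_univ b) (Set.mem_univ a)
  simpa using this

/-- Pointwise Lipschitz continuity and uniform boundedness of the deformable
image registration load `f_u(x) = (T(x + u(x)) − R(x)) ∇T(x + u(x))`. -/
theorem stmt_6 (d : ℕ) (hd : 1 ≤ d)
    (T R : EuclideanSpace ℝ (Fin d) → ℝ)
    (hT : Differentiable ℝ T)
    (M_T M_R Mgrad Lgrad : ℝ)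
    (hMT : 0 ≤ M_T) (hMR : 0 ≤ M_R) (hMg : 0 ≤ Mgrad) (hLg : 0 ≤ Lgrad)
    (hTbdd : ∀ x, |T x| ≤ M_T)
    (hRbdd : ∀ x, |R x| ≤ M_R)
    (hgradbdd : ∀ x, ‖gradient T x‖ ≤ Mgrad)
    (hgradLip : ∀ x y, ‖gradient T x - gradient T y‖ ≤ Lgrad * ‖x - y‖)
    (Ω : Set (EuclideanSpace ℝ (Fin d)))
    (u v : EuclideanSpace ℝ (Fin d) → EuclideanSpace ℝ (Fin d))
    (f : (EuclideanSpace ℝ (Fin d) → EuclideanSpace ℝ (Fin d)) →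
      EuclideanSpace ℝ (Fin d) → EuclideanSpace ℝ (Fin d))
    (hf : ∀ w x, f w x = (T (x + w x) - R x) • gradient T (x + w x)) :
    ∀ x ∈ Ω,
      ‖f u x - f v x‖ ≤ (Mgrad ^ 2 + (M_T + M_R) * Lgrad) * ‖u x - v x‖ ∧
      ‖f u x‖ ≤ (M_T + M_R) * Mgrad := by
  intro x _
  set a := x + u x
  set b := x + v x
  have hab : a - b = u x - v x := by simp [a, b]
  constructor
  · have key : f u x - f v x
        = (T a - T b) • gradient T a + (T b - R x) • (gradient T a - gradient T b) := by
      rw [hf, hf]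
      simp only [smul_sub, sub_smul]
      abel
    rw [key]
    calc ‖(T a - T b) • gradient T a + (T b - R x) • (gradient T a - gradient T b)‖
        ≤ ‖(T a - T b) • gradient T a‖ + ‖(T b - R x) • (gradient T a - gradient T b)‖ :=
          norm_add_le _ _
      _ = |T a - T b| * ‖gradient T a‖ + |T b - R x| * ‖gradient T a - gradient T b‖ := by
          rw [norm_smul, norm_smul]; simp [Real.norm_eq_abs]
      _ ≤ (Mgrad * ‖a - b‖) * Mgrad + (M_T + M_R) * (Lgrad * ‖a - b‖) := by
          gcongr
          · exact stmt_6_Tlip d T hT Mgrad hgradbdd a b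
          · exact hgradbdd a
          · calc |T b - R x| ≤ |T b| + |R x| := abs_sub _ _
              _ ≤ M_T + M_R := add_le_add (hTbdd b) (hRbdd x)
          · exact hgradLip a b
      _ = (Mgrad ^ 2 + (M_T + M_R) * Lgrad) * ‖a - b‖ := by ring
      _ = _ := by rw [hab]
  · rw [hf]
    calc ‖(T a - R x) • gradient T a‖ = |T a - R x| * ‖gradient T a‖ := by
          rw [norm_smul]; simp [Real.norm_eq_abs]
      _ ≤ (M_T + M_R) * Mgrad := by
          gcongr
          · calc |T a - R x| ≤ |T a| + |R x| := abs_sub _ _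
              _ ≤ M_T + M_R := add_le_add (hTbdd a) (hRbdd x)
          · exact hgradbdd a
end

section
/- (Element bubble norm equivalence, uniform in the mesh size.) Let d ≥ 1 and k ≥ 0 be integers. There exists a constant γ₁ > 0, depending only on d and k, such that for every h > 0 and every polynomial function q : ℝ^d → ℝ of total degree at most k, γ₁ ∫_{(0,h)^d} q(x)² dx ≤ ∫_{(0,h)^d} ψ_h(x) q(x)² dx, where ψ_h is the element bubble function of the cube (0,h)^d, defined by ψ_h(x) := ∏_{i=1}^d 4 (x_i/h)(1 − x_i/h). -/
/-!
On the open unit cube, `q ↦ ∫ ψ₁ q²` and `q ↦ ∫ q²` are continuous quadratic forms on the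
finite-dimensional space of polynomials of total degree at most `k`; the first is positive
definite because a polynomial vanishing on an open box is zero. Compactness of the unit sphere
of coordinates then bounds the second by a multiple of the first. The substitution `x = h • y`
maps `(0,1)^d` onto `(0,h)^d`, turns `ψ_h` into `ψ_1` and `q` into a polynomial of the same
degree, and multiplies both integrals by `h ^ d`, so the constant does not depend on `h`.
-/

open MeasureTheory Set MvPolynomial Pointwise

theorem exists_pos_mul_le_of_homogeneous {E : Type*} [NormedAddCommGroup E] [NormedSpace ℝ E]
    [FiniteDimensional ℝ E] {f g : E → ℝ} (hf : Continuous f) (hg : Continuous g)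
    (hf_smul : ∀ (t : ℝ) (c : E), f (t • c) = t ^ 2 * f c)
    (hg_smul : ∀ (t : ℝ) (c : E), g (t • c) = t ^ 2 * g c)
    (hf_pos : ∀ c ≠ 0, 0 < f c) :
    ∃ γ > 0, ∀ c, γ * g c ≤ f c := by
  have hS := isCompact_sphere (0 : E) 1
  obtain ⟨m, hm, hfm⟩ := hS.exists_forall_le' hf.continuousOn fun u hu =>
    hf_pos u (ne_zero_of_mem_unit_sphere ⟨u, hu⟩)
  obtain ⟨M, hM⟩ := hS.bddAbove_image hg.continuousOn
  refine ⟨m / max M 1, by positivity, fun c => ?_⟩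
  rcases eq_or_ne c 0 with rfl | hc
  · have hf0 : f 0 = 0 := by simpa using hf_smul 0 0
    have hg0 : g 0 = 0 := by simpa using hg_smul 0 0
    simp [hf0, hg0]
  set u := ‖c‖⁻¹ • c
  have hu : u ∈ Metric.sphere (0 : E) 1 := by
    simp [u, norm_smul, inv_mul_cancel₀ (norm_ne_zero_iff.2 hc)]
  have hcu : c = ‖c‖ • u := by simp [u, smul_smul, mul_inv_cancel₀ (norm_ne_zero_iff.2 hc)]
  have hgu : m / max M 1 * g u ≤ f u := calc
    m / max M 1 * g u ≤ m / max M 1 * max M 1 := by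
      gcongr; exact (hM ⟨u, hu, rfl⟩).trans (le_max_left _ _)
    _ = m := div_mul_cancel₀ _ (by positivity)
    _ ≤ f u := hfm u hu
  rw [hcu, hf_smul, hg_smul, mul_left_comm]
  exact mul_le_mul_of_nonneg_left hgu (sq_nonneg _)

theorem IsOpen.setIntegral_pos_of_continuous {X : Type*} [TopologicalSpace X] [MeasurableSpace X]
    [OpensMeasurableSpace X] {μ : Measure X} [μ.IsOpenPosMeasure] {U : Set X} (hU : IsOpen U)
    {f : X → ℝ} (hf : Continuous f) (hfi : IntegrableOn f U μ) (hf_nonneg : ∀ x ∈ U, 0 ≤ f x)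
    {x₀ : X} (hx₀ : x₀ ∈ U) (hfx₀ : f x₀ ≠ 0) : 0 < ∫ x in U, f x ∂μ := by
  rw [setIntegral_pos_iff_support_of_nonneg_ae
    ((ae_restrict_iff' hU.measurableSet).2 (ae_of_all _ hf_nonneg)) hfi]
  exact (hf.isOpen_support.inter hU).measure_pos μ ⟨x₀, hfx₀, hx₀⟩

namespace MvPolynomial

theorem totalDegree_aeval_le_of_isHomogeneous {R σ τ : Type*} [CommSemiring R]
    {g : σ → MvPolynomial τ R} (hg : ∀ i, (g i).IsHomogeneous 1) (q : MvPolynomial σ R) :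
    (aeval g q).totalDegree ≤ q.totalDegree := by
  conv_lhs => rw [← sum_homogeneousComponent q]
  rw [map_sum]
  refine totalDegree_finsetSum_le fun j hj => ?_
  have hdeg := ((homogeneousComponent_isHomogeneous j q).aeval g hg).totalDegree_le
  rw [one_mul] at hdeg
  exact hdeg.trans (Nat.lt_succ_iff.1 (Finset.mem_range.1 hj))

theorem eval_aeval_C_mul_X {ι : Type*} (h : ℝ) (q : MvPolynomial ι ℝ) (x : ι → ℝ) :
    eval x (aeval (fun i => C h * X i) q) = eval (h • x) q := by
  rw [aeval_eq_bind₁, hom_bind₁]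
  exact eval₂Hom_congr (RingHom.ext eval_C) (_root_.funext fun i => by simp) rfl

end MvPolynomial

def openCube (d : ℕ) (h : ℝ) : Set (Fin d → ℝ) := univ.pi fun _ => Ioo 0 h

noncomputable def bubble {d : ℕ} (h : ℝ) (x : Fin d → ℝ) : ℝ :=
  ∏ i, 4 * (x i / h) * (1 - x i / h)

section OpenCube

variable {d : ℕ}

theorem isOpen_openCube (h : ℝ) : IsOpen (openCube d h) :=
  isOpen_set_pi finite_univ fun _ _ => isOpen_Ioo

theorem openCube_ae_eq_Icc (h : ℝ) : openCube d h =ᵐ[volume] Icc 0 (fun _ => h) :=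
  Measure.univ_pi_Ioo_ae_eq_Icc

theorem Continuous.integrableOn_openCube {f : (Fin d → ℝ) → ℝ} (hf : Continuous f) (h : ℝ) :
    IntegrableOn f (openCube d h) :=
  hf.integrableOn_Icc.congr_set_ae (openCube_ae_eq_Icc h)

theorem continuous_setIntegral_openCube {X : Type*} [TopologicalSpace X]
    [FirstCountableTopology X] [LocallyCompactSpace X] {F : X → (Fin d → ℝ) → ℝ}
    (hF : Continuous F.uncurry) (h : ℝ) :
    Continuous fun c => ∫ x in openCube d h, F c x := by
  simp_rw [setIntegral_congr_set (openCube_ae_eq_Icc h)]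
  exact continuous_parametric_integral_of_continuous hF isCompact_Icc

theorem smul_openCube {h : ℝ} (hh : 0 < h) : h • openCube d 1 = openCube d h := by
  simp [openCube, smul_set_univ_pi, Pi.smul_def, LinearOrderedField.smul_Ioo hh]

theorem setIntegral_openCube_eq_pow_mul {h : ℝ} (hh : 0 < h) (f : (Fin d → ℝ) → ℝ) :
    ∫ x in openCube d h, f x = h ^ d * ∫ x in openCube d 1, f (h • x) := by
  rw [Measure.setIntegral_comp_smul_of_pos _ _ _ hh, smul_openCube hh, Module.finrank_fin_fun,
    smul_eq_mul, mul_inv_cancel_left₀ (by positivity)]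

theorem exists_mem_openCube_eval_ne_zero {h : ℝ} (hh : 0 < h) {p : MvPolynomial (Fin d) ℝ}
    (hp : p ≠ 0) : ∃ x ∈ openCube d h, eval x p ≠ 0 := by
  contrapose! hp
  exact funext_set _ (fun _ => Ioo_infinite hh) fun x hx => by simpa using hp x hx

theorem integral_openCube_mul_eval_sq_pos {w : (Fin d → ℝ) → ℝ} (hw : Continuous w) {h : ℝ}
    (hh : 0 < h) (hw_pos : ∀ x ∈ openCube d h, 0 < w x) {p : MvPolynomial (Fin d) ℝ}
    (hp : p ≠ 0) : 0 < ∫ x in openCube d h, w x * eval x p ^ 2 := by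
  obtain ⟨x₀, hx₀, hpx₀⟩ := exists_mem_openCube_eval_ne_zero hh hp
  have hcont : Continuous fun x => w x * eval x p ^ 2 := hw.mul ((continuous_eval p).pow 2)
  exact (isOpen_openCube h).setIntegral_pos_of_continuous hcont (hcont.integrableOn_openCube h)
    (fun x hx => mul_nonneg (hw_pos x hx).le (sq_nonneg _)) hx₀
    (mul_ne_zero (hw_pos x₀ hx₀).ne' (pow_ne_zero 2 hpx₀))

theorem integral_openCube_mul_eval_smul_sq (w : (Fin d → ℝ) → ℝ) (h t : ℝ)
    (p : MvPolynomial (Fin d) ℝ) :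
    ∫ x in openCube d h, w x * eval x (t • p) ^ 2 =
      t ^ 2 * ∫ x in openCube d h, w x * eval x p ^ 2 := by
  rw [← integral_const_mul]
  simp only [smul_eval]
  congr 1 with x
  ring

theorem continuous_integral_openCube_mul_eval_linearCombination_sq {ι : Type*} [Fintype ι]
    (p : ι → MvPolynomial (Fin d) ℝ) {w : (Fin d → ℝ) → ℝ} (hw : Continuous w) (h : ℝ) :
    Continuous fun c : ι → ℝ =>
      ∫ x in openCube d h, w x * eval x (Fintype.linearCombination ℝ p c) ^ 2 := by
  refine continuous_setIntegral_openCube ?_ h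
  have hp : ∀ i, Continuous fun x => eval x (p i) := fun i => continuous_eval (p i)
  simp only [Function.uncurry_def, Fintype.linearCombination_apply, map_sum, smul_eval]
  fun_prop

theorem LinearIndependent.exists_pos_mul_integral_openCube_eval_sq_le {ι : Type*} [Fintype ι]
    {p : ι → MvPolynomial (Fin d) ℝ} (hp : LinearIndependent ℝ p) {w : (Fin d → ℝ) → ℝ}
    (hw : Continuous w) (hw_pos : ∀ x ∈ openCube d 1, 0 < w x) :
    ∃ γ > 0, ∀ c : ι → ℝ,
      γ * ∫ x in openCube d 1, eval x (Fintype.linearCombination ℝ p c) ^ 2 ≤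
        ∫ x in openCube d 1, w x * eval x (Fintype.linearCombination ℝ p c) ^ 2 := by
  have hinj := linearIndependent_iff_injective_fintypeLinearCombination.1 hp
  obtain ⟨γ, hγ, hle⟩ := exists_pos_mul_le_of_homogeneous
    (continuous_integral_openCube_mul_eval_linearCombination_sq p hw 1)
    (continuous_integral_openCube_mul_eval_linearCombination_sq p continuous_const 1)
    (fun t c => by rw [map_smul, integral_openCube_mul_eval_smul_sq])
    (fun t c => by rw [map_smul, integral_openCube_mul_eval_smul_sq (fun _ => 1)])
    (fun c hc => integral_openCube_mul_eval_sq_pos hw one_pos hw_pos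
      ((map_ne_zero_iff _ hinj).2 hc))
  exact ⟨γ, hγ, fun c => by simpa using hle c⟩

theorem exists_pos_mul_integral_openCube_eval_sq_le (k : ℕ) {w : (Fin d → ℝ) → ℝ}
    (hw : Continuous w) (hw_pos : ∀ x ∈ openCube d 1, 0 < w x) :
    ∃ γ > 0, ∀ q : MvPolynomial (Fin d) ℝ, q.totalDegree ≤ k →
      γ * ∫ x in openCube d 1, eval x q ^ 2 ≤ ∫ x in openCube d 1, w x * eval x q ^ 2 := by
  let V := restrictTotalDegree (Fin d) ℝ k
  let b := Module.finBasis ℝ V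
  obtain ⟨γ, hγ, hle⟩ :=
    (b.linearIndependent.map' V.subtype V.ker_subtype).exists_pos_mul_integral_openCube_eval_sq_le
      hw hw_pos
  refine ⟨γ, hγ, fun q hq => ?_⟩
  have hqV : q ∈ V := (mem_restrictTotalDegree _ _ _).2 hq
  have hrepr : Fintype.linearCombination ℝ (V.subtype ∘ b) (b.repr ⟨q, hqV⟩) = q := by
    have := congrArg Subtype.val (b.sum_repr ⟨q, hqV⟩)
    rwa [Submodule.coe_sum] at this
  simpa only [hrepr] using hle (b.repr ⟨q, hqV⟩)

theorem continuous_bubble (h : ℝ) : Continuous (bubble (d := d) h) := by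
  unfold bubble
  fun_prop

theorem bubble_pos {h : ℝ} (hh : 0 < h) {x : Fin d → ℝ} (hx : x ∈ openCube d h) :
    0 < bubble h x := by
  refine Finset.prod_pos fun i _ => ?_
  obtain ⟨hx0, hxh⟩ := hx i (mem_univ i)
  have hlt : x i / h < 1 := (div_lt_one hh).2 hxh
  have hpos : 0 < x i / h := div_pos hx0 hh
  nlinarith

theorem bubble_smul {h : ℝ} (hh : h ≠ 0) (x : Fin d → ℝ) : bubble h (h • x) = bubble 1 x := by
  simp [bubble, mul_div_cancel_left₀ _ hh]

end OpenCube

theorem stmt_10_general (d k : ℕ) :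
    ∃ γ₁ : ℝ, 0 < γ₁ ∧
      ∀ h : ℝ, 0 < h →
        ∀ q : MvPolynomial (Fin d) ℝ, q.totalDegree ≤ k →
          γ₁ * ∫ x in Set.univ.pi (fun _ : Fin d => Set.Ioo (0:ℝ) h),
              (MvPolynomial.eval x q) ^ 2 ≤
            ∫ x in Set.univ.pi (fun _ : Fin d => Set.Ioo (0:ℝ) h),
              (∏ i : Fin d, 4 * (x i / h) * (1 - x i / h)) *
                (MvPolynomial.eval x q) ^ 2 := by
  obtain ⟨γ, hγ, hle⟩ := exists_pos_mul_integral_openCube_eval_sq_le k (continuous_bubble 1)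
    fun x hx => bubble_pos one_pos hx
  refine ⟨γ, hγ, fun h hh q hq => ?_⟩
  let q' := aeval (fun i => C h * X i) q
  have hq' : q'.totalDegree ≤ k :=
    (totalDegree_aeval_le_of_isHomogeneous (fun i => isHomogeneous_C_mul_X h i) q).trans hq
  change γ * ∫ x in openCube d h, eval x q ^ 2 ≤ ∫ x in openCube d h, bubble h x * eval x q ^ 2
  rw [setIntegral_openCube_eq_pow_mul hh, setIntegral_openCube_eq_pow_mul hh, mul_left_comm]
  simp only [bubble_smul hh.ne', ← eval_aeval_C_mul_X]
  exact mul_le_mul_of_nonneg_left (hle q' hq') (by positivity)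

/-- Element bubble norm equivalence, uniform in the mesh size: there is
`γ₁ > 0` depending only on `d` and `k` such that for all `h > 0` and all
polynomials `q` of total degree at most `k`,
`γ₁ ∫_{(0,h)^d} q² ≤ ∫_{(0,h)^d} ψ_h q²`. -/
theorem stmt_10 (d k : ℕ) (hd : 1 ≤ d) :
    ∃ γ₁ : ℝ, 0 < γ₁ ∧
      ∀ h : ℝ, 0 < h →
        ∀ q : MvPolynomial (Fin d) ℝ, q.totalDegree ≤ k →
          γ₁ * ∫ x in Set.univ.pi (fun _ : Fin d => Set.Ioo (0:ℝ) h),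
              (MvPolynomial.eval x q) ^ 2 ≤
            ∫ x in Set.univ.pi (fun _ : Fin d => Set.Ioo (0:ℝ) h),
              (∏ i : Fin d, 4 * (x i / h) * (1 - x i / h)) *
                (MvPolynomial.eval x q) ^ 2 :=
  stmt_10_general d k
end
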